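/- Let A be a real N×n matrix, J a subset of its column indices, δ ∈ [0,1), and let S be a δ-SE of A. Let X* be a minimizer of X ↦ ‖SA_{:,J}X − SA‖ in Frobenius norm. Then ‖A_{:,J}X* − A‖² ≤ (1−δ)^{−1} · min_X ‖A_{:,J}X − A‖². -/

import Mathlib

noncomputable section

/-- Squared Euclidean norm of a vector. -/
def sqnorm {α : Type*} [Fintype α] (v : α → ℝ) : ℝ := ∑ i, v i ^ 2

/-- Squared Frobenius norm of a matrix. -/
def frobSq {α β : Type*} [Fintype α] [Fintype β] (B : Matrix α β ℝ) : ℝ := ∑ i, ∑ j, B i j ^ 2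

/-- `S` is a `δ`-subspace embedding of (the column space of) `A`. -/
def IsSE {m N n : ℕ} (δ : ℝ) (S : Matrix (Fin m) (Fin N) ℝ)
    (A : Matrix (Fin N) (Fin n) ℝ) : Prop :=
  ∀ x ∈ LinearMap.range A.mulVecLin,
    (1 - δ) * sqnorm x ≤ sqnorm (S.mulVec x) ∧ sqnorm (S.mulVec x) ≤ (1 + δ) * sqnorm x

/-- `‖A - A^{(r)}‖²`: best Frobenius approximation error of `A` by matrices of rank ≤ `r`. -/
def rankErrSq {M n : Type*} [Fintype M] [Fintype n] (A : Matrix M n ℝ) (r : ℕ) : ℝ :=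
  sInf {t : ℝ | ∃ B : Matrix M n ℝ, B.rank ≤ r ∧ t = frobSq (A - B)}

/-- The submatrix `A_{:,J}` of the columns of `A` indexed by the finite set `J`. -/
def colsOf {N n : ℕ} (A : Matrix (Fin N) (Fin n) ℝ) (J : Finset (Fin n)) :
    Matrix (Fin N) ↥J ℝ :=
  A.submatrix id Subtype.val

open Matrix Finset

section Aux

variable {α β γ : Type*} [Fintype α] [Fintype β] [Fintype γ]

/-- Frobenius inner product. -/
def dotF (B C : Matrix α β ℝ) : ℝ := ∑ i, ∑ j, B i j * C i j

lemma frobSq_nonneg (B : Matrix α β ℝ) : 0 ≤ frobSq B :=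
  Finset.sum_nonneg fun _ _ => Finset.sum_nonneg fun _ _ => sq_nonneg _

lemma dotF_comm (B C : Matrix α β ℝ) : dotF B C = dotF C B := by
  simp [dotF, mul_comm]

lemma frobSq_add (B C : Matrix α β ℝ) :
    frobSq (B + C) = frobSq B + 2 * dotF B C + frobSq C := by
  simp only [frobSq, dotF, Matrix.add_apply, add_sq, Finset.sum_add_distrib, Finset.mul_sum]
  ring

lemma frobSq_smul (t : ℝ) (B : Matrix α β ℝ) : frobSq (t • B) = t ^ 2 * frobSq B := by
  simp [frobSq, Matrix.smul_apply, smul_eq_mul, mul_pow, Finset.mul_sum]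

lemma frobSq_neg (B : Matrix α β ℝ) : frobSq (-B) = frobSq B := by
  simp [frobSq]

lemma dotF_smul_right (t : ℝ) (B C : Matrix α β ℝ) : dotF B (t • C) = t * dotF B C := by
  simp only [dotF, Matrix.smul_apply, smul_eq_mul, Finset.mul_sum]
  exact Finset.sum_congr rfl fun i _ => Finset.sum_congr rfl fun j _ => by ring

lemma dotF_eq_trace (B C : Matrix α β ℝ) : dotF B C = Matrix.trace (Bᵀ * C) := by
  simp only [Matrix.trace, Matrix.diag, Matrix.mul_apply, Matrix.transpose_apply, dotF]
  exact Finset.sum_comm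

lemma dotF_mul_left (P : Matrix α γ ℝ) (Y : Matrix γ β ℝ) (M : Matrix α β ℝ) :
    dotF (P * Y) M = dotF Y (Pᵀ * M) := by
  rw [dotF_eq_trace, dotF_eq_trace, Matrix.transpose_mul, Matrix.mul_assoc]

lemma dotF_stdBasis [DecidableEq α] [DecidableEq β] (k : α) (j : β) (M : Matrix α β ℝ) :
    dotF (Matrix.single k j 1) M = M k j := by
  simp [dotF, Matrix.single, ite_and, Finset.sum_ite_eq]

lemma quad_key {c q : ℝ} (hq : 0 ≤ q) (h : ∀ t : ℝ, 0 ≤ 2 * t * c + t ^ 2 * q) : c = 0 := by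
  have h1 := h (-c / (q + 1))
  have hp : 0 < (q + 1) ^ 2 := by positivity
  have e : 2 * (-c / (q + 1)) * c + (-c / (q + 1)) ^ 2 * q = -(c ^ 2 * (q + 2)) / (q + 1) ^ 2 := by
    field_simp; ring
  rw [e, le_div_iff₀ hp] at h1
  nlinarith [sq_nonneg c]

/-- Pythagoras from normal equations. -/
lemma pyth (P : Matrix α γ ℝ) (Y : Matrix γ β ℝ) (M : Matrix α β ℝ)
    (h : Pᵀ * M = 0) : frobSq (P * Y + M) = frobSq (P * Y) + frobSq M := by
  rw [frobSq_add, dotF_mul_left, h]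
  simp [dotF]

/-- A minimizer of `X ↦ frobSq (B*X - R)` satisfies the normal equations. -/
lemma normal_of_min [DecidableEq γ] [DecidableEq β] (B : Matrix α γ ℝ) (R : Matrix α β ℝ)
    (Xs : Matrix γ β ℝ)
    (h : ∀ X : Matrix γ β ℝ, frobSq (B * Xs - R) ≤ frobSq (B * X - R)) :
    Bᵀ * (B * Xs - R) = 0 := by
  ext k j
  simp only [Matrix.zero_apply]
  set M := B * Xs - R with hM
  set E := Matrix.single k j (1 : ℝ) with hE
  have key : ∀ t : ℝ, 0 ≤ 2 * t * (Bᵀ * M) k j + t ^ 2 * frobSq (B * E) := by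
    intro t
    have h1 := h (Xs + t • E)
    have h2 : B * (Xs + t • E) - R = M + t • (B * E) := by
      rw [Matrix.mul_add, Matrix.mul_smul, hM]; abel
    rw [h2, frobSq_add, dotF_smul_right, frobSq_smul, dotF_comm, dotF_mul_left,
      dotF_stdBasis] at h1
    nlinarith [h1]
  exact quad_key (frobSq_nonneg _) key

/-- Existence of a solution to the least-squares normal equations. -/
lemma exists_normal [DecidableEq γ] (C : Matrix α γ ℝ) (A : Matrix α β ℝ) :
    ∃ X : Matrix γ β ℝ, Cᵀ * (C * X - A) = 0 := by
  have hle : LinearMap.range (Cᵀ * C).mulVecLin ≤ LinearMap.range Cᵀ.mulVecLin := by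
    rw [Matrix.mulVecLin_mul]
    exact LinearMap.range_comp_le_range _ _
  have hrank : Cᵀ.rank ≤ (Cᵀ * C).rank := by
    rw [Matrix.rank_transpose_mul_self, Matrix.rank_transpose]
  have heq : LinearMap.range (Cᵀ * C).mulVecLin = LinearMap.range Cᵀ.mulVecLin :=
    Submodule.eq_of_le_of_finrank_le hle hrank
  have hcol : ∀ j : β, ∃ x : γ → ℝ, (Cᵀ * C).mulVec x = Cᵀ.mulVec (fun i => A i j) := by
    intro j
    have : Cᵀ.mulVec (fun i => A i j) ∈ LinearMap.range Cᵀ.mulVecLin :=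
      ⟨fun i => A i j, Matrix.mulVecLin_apply _ _⟩
    rw [← heq] at this
    obtain ⟨x, hx⟩ := this
    exact ⟨x, by rw [← Matrix.mulVecLin_apply]; exact hx⟩
  choose x hx using hcol
  refine ⟨Matrix.of fun k j => x j k, ?_⟩
  ext k j
  have h1 : (Cᵀ * (C * Matrix.of fun k j => x j k)) k j = ((Cᵀ * C).mulVec (x j)) k := by
    rw [← Matrix.mul_assoc]
    simp [Matrix.mul_apply, Matrix.mulVec, dotProduct]
  have h2 : (Cᵀ * A) k j = (Cᵀ.mulVec (fun i => A i j)) k := by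
    simp [Matrix.mul_apply, Matrix.mulVec, dotProduct]
  simp only [Matrix.mul_sub, Matrix.sub_apply, Matrix.zero_apply, h1, h2, hx j, sub_self]

lemma frobSq_cols (M : Matrix α β ℝ) : frobSq M = ∑ j, sqnorm (fun i => M i j) := by
  rw [frobSq]; exact Finset.sum_comm

lemma col_mul {a b c : Type*} [Fintype a] [Fintype b] [Fintype c]
    (S : Matrix a b ℝ) (M : Matrix b c ℝ) (j : c) :
    (fun i => (S * M) i j) = S.mulVec (fun i => M i j) := by
  ext i; simp [Matrix.mul_apply, Matrix.mulVec, dotProduct]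

/-- SE bounds transferred to Frobenius norms of matrices of the form `A*W`. -/
lemma se_frob {m N n : ℕ} {δ : ℝ} {S : Matrix (Fin m) (Fin N) ℝ}
    {A : Matrix (Fin N) (Fin n) ℝ} (hSE : IsSE δ S A) (W : Matrix (Fin n) β ℝ) :
    (1 - δ) * frobSq (A * W) ≤ frobSq (S * (A * W)) ∧
      frobSq (S * (A * W)) ≤ (1 + δ) * frobSq (A * W) := by
  rw [frobSq_cols (A * W), frobSq_cols (S * (A * W)), Finset.mul_sum, Finset.mul_sum]
  constructor <;> refine Finset.sum_le_sum fun j _ => ?_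
  · rw [col_mul S (A * W) j, col_mul A W j]
    exact (hSE _ ⟨fun k => W k j, Matrix.mulVecLin_apply _ _⟩).1
  · rw [col_mul S (A * W) j, col_mul A W j]
    exact (hSE _ ⟨fun k => W k j, Matrix.mulVecLin_apply _ _⟩).2

end Aux

/-- If `S` is a `δ`-SE of `A` and `X*` minimizes the sketched least-squares problem
`X ↦ ‖S A_{:,J} X - S A‖`, then
`‖A_{:,J} X* - A‖² ≤ (1-δ)⁻¹ min_X ‖A_{:,J} X - A‖²`. -/
theorem stmt8 {N n m : ℕ} (A : Matrix (Fin N) (Fin n) ℝ) (J : Finset (Fin n))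
    (δ : ℝ) (hδ : δ ∈ Set.Ico (0 : ℝ) 1)
    (S : Matrix (Fin m) (Fin N) ℝ) (hSE : IsSE δ S A)
    (Xs : Matrix ↥J (Fin n) ℝ)
    (hXs : ∀ X : Matrix ↥J (Fin n) ℝ,
      frobSq (S * colsOf A J * Xs - S * A) ≤ frobSq (S * colsOf A J * X - S * A)) :
    frobSq (colsOf A J * Xs - A) ≤
      (1 - δ)⁻¹ * sInf {t : ℝ | ∃ X : Matrix ↥J (Fin n) ℝ,
        t = frobSq (colsOf A J * X - A)} := by
  obtain ⟨hδ0, hδ1⟩ := hδ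
  have h1δ : (0 : ℝ) < 1 - δ := by linarith
  set C : Matrix (Fin N) ↥J ℝ := colsOf A J with hC
  -- the inclusion matrix
  set E : Matrix (Fin n) ↥J ℝ := fun l k => if l = (k : Fin n) then (1 : ℝ) else 0 with hEdef
  have hCE : C = A * E := by
    ext i k
    rw [Matrix.mul_apply]
    simp [hC, colsOf, Matrix.mul_apply, hEdef, mul_ite, Finset.sum_ite_eq']
  have hform : ∀ X : Matrix ↥J (Fin n) ℝ, C * X - A = A * (E * X - 1) := by
    intro X
    rw [Matrix.mul_sub, Matrix.mul_one, ← Matrix.mul_assoc, ← hCE]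
  -- true minimizer
  obtain ⟨Xh, hXh⟩ := exists_normal C A
  set Ms := C * Xs - A with hMs
  set Mh := C * Xh - A with hMh
  -- real-space Pythagoras: frobSq Ms = frobSq (C*(Xs - Xh)) + frobSq Mh
  have hdecomp : ∀ X : Matrix ↥J (Fin n) ℝ, C * X - A = C * (X - Xh) + Mh := by
    intro X; rw [Matrix.mul_sub, hMh]; abel
  have hpyth : ∀ X : Matrix ↥J (Fin n) ℝ,
      frobSq (C * X - A) = frobSq (C * (X - Xh)) + frobSq Mh := by
    intro X; rw [hdecomp X]; exact pyth C _ Mh hXh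
  -- Mh bounds sInf from below
  have hMh_le : frobSq Mh ≤ sInf {t : ℝ | ∃ X : Matrix ↥J (Fin n) ℝ,
      t = frobSq (colsOf A J * X - A)} := by
    refine le_csInf ⟨frobSq (colsOf A J * Xh - A), ⟨Xh, rfl⟩⟩ ?_
    rintro t ⟨X, rfl⟩
    rw [← hC, hpyth X]
    have := frobSq_nonneg (C * (X - Xh))
    linarith
  -- sketched normal equations
  have hN : (S * C)ᵀ * ((S * C) * Xs - S * A) = 0 := normal_of_min (S * C) (S * A) Xs hXs
  -- sketched Pythagoras: frobSq (S*Mh) = frobSq (S*C*(Xh - Xs)) + frobSq (S*Ms)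
  have hsk : ∀ X : Matrix ↥J (Fin n) ℝ, S * (C * X - A) = (S * C) * X - S * A := by
    intro X; rw [Matrix.mul_sub, Matrix.mul_assoc]
  have hskdecomp : S * Mh = (S * C) * (Xh - Xs) + ((S * C) * Xs - S * A) := by
    rw [hMh, hsk Xh, Matrix.mul_sub]; abel
  have hskpyth : frobSq (S * Mh) =
      frobSq ((S * C) * (Xh - Xs)) + frobSq (S * Ms) := by
    rw [hskdecomp, pyth (S * C) (Xh - Xs) _ hN, hMs, hsk Xs]
  -- SE bounds
  have hfMs := hform Xs
  have hfMh := hform Xh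
  have hfD : C * (Xh - Xs) = A * (E * (Xh - Xs)) := by
    rw [← Matrix.mul_assoc, ← hCE]
  have b1 : (1 - δ) * frobSq Ms ≤ frobSq (S * Ms) := by
    rw [hMs, hfMs]; exact (se_frob hSE _).1
  have b2 : frobSq (S * Mh) ≤ (1 + δ) * frobSq Mh := by
    rw [hMh, hfMh]; exact (se_frob hSE _).2
  have b3 : (1 - δ) * frobSq (C * (Xh - Xs)) ≤ frobSq (S * (C * (Xh - Xs))) := by
    rw [hfD]; exact (se_frob hSE _).1
  have hSCDeq : S * (C * (Xh - Xs)) = (S * C) * (Xh - Xs) := (Matrix.mul_assoc _ _ _).symm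
  rw [hSCDeq] at b3
  -- real Pythagoras for Xs, with frobSq (C*(Xs - Xh)) = frobSq (C*(Xh - Xs))
  have hDsym : frobSq (C * (Xs - Xh)) = frobSq (C * (Xh - Xs)) := by
    have : C * (Xs - Xh) = -(C * (Xh - Xs)) := by
      rw [Matrix.mul_sub, Matrix.mul_sub]; abel
    rw [this, frobSq_neg]
  have hpythXs : frobSq Ms = frobSq (C * (Xh - Xs)) + frobSq Mh := by
    rw [hMs, hpyth Xs, hDsym]
  -- combine
  have key : (1 - δ) * frobSq Ms ≤ frobSq Mh := by nlinarith [frobSq_nonneg (S * Ms)]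
  have key2 : (1 - δ) * frobSq Ms ≤ sInf {t : ℝ | ∃ X : Matrix ↥J (Fin n) ℝ,
      t = frobSq (colsOf A J * X - A)} := le_trans key hMh_le
  calc frobSq (colsOf A J * Xs - A) = (1 - δ)⁻¹ * ((1 - δ) * frobSq Ms) := by
        rw [← hC, ← hMs, ← mul_assoc, inv_mul_cancel₀ (ne_of_gt h1δ), one_mul]
    _ ≤ _ := mul_le_mul_of_nonneg_left key2 (by positivity)
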